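/- Let X be a finite set and F ⊆ 2^X. In the (a,b) Avoider-Enforcer game on (X,F), if Σ_{F∈F} (1+1/a)^{-|F|} < (1+1/a)^{-a}, then Avoider (as first or second player) has a winning strategy. -/

import Mathlib

open Finset

variable {α : Type*} [Fintype α] [DecidableEq α]

/-- `avoiderWinsAux F a b fuel t A E` : in the (monotone) `(a,b)` Avoider-Enforcer game
on the finite board `α` with family of target sets `F`, from the position where Avoider
has claimed `A` and Enforcer has claimed `E`, the player to move being Avoider if
`t = true` and Enforcer if `t = false`, Avoider can force that by the end of the game
(when all board elements are claimed) he has not fully claimed any target set.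
In each turn the player to move claims at least his bias many previously unclaimed
elements (or all remaining elements if fewer remain).  The `fuel` parameter bounds the
number of remaining turns; since each turn from a position with free elements claims at
least one element (for positive biases), `fuel = |α| + 1` captures the full game. -/
def avoiderWinsAux (F : Finset (Finset α)) (a b : ℕ) :
    ℕ → Bool → Finset α → Finset α → Prop
  | 0, _, A, _ => ¬ ∃ W ∈ F, W ⊆ A
  | fuel + 1, t, A, E =>
      let free := Finset.univ \ (A ∪ E)
      if free.Nonempty then
        if t then
          ∃ S ⊆ free, min a free.card ≤ S.card ∧
            avoiderWinsAux F a b fuel false (A ∪ S) E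
        else
          ∀ S ⊆ free, min b free.card ≤ S.card →
            avoiderWinsAux F a b fuel true A (E ∪ S)
      else ¬ ∃ W ∈ F, W ⊆ A

/-- Avoider has a winning strategy in the `(a,b)` Avoider-Enforcer game `(α, F)`,
moving first (`t = true`) or second (`t = false`). -/
def AvoiderWins (F : Finset (Finset α)) (a b : ℕ) (t : Bool) : Prop :=
  avoiderWinsAux F a b (Fintype.card α + 1) t ∅ ∅

/-!
Avoider plays a potential strategy with `q = a / (a + 1) = (1 + 1/a)⁻¹`. A target is live while
Enforcer owns none of its elements, and then weighs `q ^ k` if `k` of its elements are not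
Avoider's; the potential is the total weight of the live targets, and the danger of an element
is the weight of the live targets through it. Claiming `x` raises the potential by
`(q⁻¹ - 1) = 1/a` times the danger of `x`, while an Enforcer element `y` removes every live
target through `y`. Avoider claims elements of least danger one at a time, so his `a` claims
raise the potential by at most the current danger of any element still free; Enforcer has to
claim at least one such element and thereby cancels the increase. So the potential stays below
`q ^ a < 1`, whereas a target fully claimed by Avoider would alone weigh `1`.
-/

namespace AvoiderEnforcer

section Potential

variable {β : Type*} [DecidableEq β] (q : ℝ) (F : Finset (Finset β))

noncomputable def potential (A E : Finset β) : ℝ :=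
  ∑ W ∈ F with Disjoint W E, q ^ (W \ A).card

noncomputable def danger (A E : Finset β) (y : β) : ℝ :=
  potential q {W ∈ F | y ∈ W} A E

variable {q F}

lemma potential_nonneg (hq : 0 ≤ q) (A E : Finset β) : 0 ≤ potential q F A E :=
  sum_nonneg fun _ _ => pow_nonneg hq _

lemma danger_nonneg (hq : 0 ≤ q) (A E : Finset β) (y : β) : 0 ≤ danger q F A E y :=
  potential_nonneg hq A E

lemma potential_mono_family (hq : 0 ≤ q) {F' : Finset (Finset β)} (h : F' ⊆ F)
    (A E : Finset β) : potential q F' A E ≤ potential q F A E :=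
  sum_le_sum_of_subset_of_nonneg (filter_subset_filter _ h) fun _ _ _ => pow_nonneg hq _

lemma danger_le_potential (hq : 0 ≤ q) (A E : Finset β) (y : β) :
    danger q F A E y ≤ potential q F A E :=
  potential_mono_family hq (filter_subset _ _) A E

lemma potential_mono_claimed (hq0 : 0 ≤ q) (hq1 : q ≤ 1) {A A' : Finset β} (h : A ⊆ A')
    (E : Finset β) : potential q F A E ≤ potential q F A' E :=
  sum_le_sum fun _ _ => pow_le_pow_of_le_one hq0 hq1 (card_le_card (sdiff_subset_sdiff le_rfl h))

lemma danger_mono_claimed (hq0 : 0 ≤ q) (hq1 : q ≤ 1) {A A' : Finset β} (h : A ⊆ A')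
    (E : Finset β) (y : β) : danger q F A E y ≤ danger q F A' E y :=
  potential_mono_claimed hq0 hq1 h E

/-- Claiming `x` multiplies the weight of every live target through `x` by `q⁻¹`. -/
lemma potential_insert (hq : q ≠ 0) {A : Finset β} {x : β} (hx : x ∉ A) (E : Finset β) :
    potential q F (insert x A) E = potential q F A E + (q⁻¹ - 1) * danger q F A E x := by
  have hterm : ∀ W : Finset β, q ^ (W \ insert x A).card
      = q ^ (W \ A).card + (q⁻¹ - 1) * if x ∈ W then q ^ (W \ A).card else 0 := by
    intro W
    split_ifs with hxW
    · rw [sdiff_insert, ← card_erase_add_one (mem_sdiff.2 ⟨hxW, hx⟩), pow_succ]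
      field_simp
      ring
    · rw [sdiff_insert_of_notMem hxW, mul_zero, add_zero]
  simp only [potential, danger, hterm, sum_add_distrib, ← mul_sum, sum_filter, filter_filter]
  congr 2
  exact sum_congr rfl fun W _ => by split_ifs <;> simp_all

lemma potential_insert_le (hq0 : 0 < q) (hq1 : q ≤ 1) {A : Finset β} {x : β} (hx : x ∉ A)
    (E : Finset β) : potential q F (insert x A) E ≤ q⁻¹ * potential q F A E := by
  have hq' : 0 ≤ q⁻¹ - 1 := sub_nonneg.2 (one_le_inv₀ hq0 |>.2 hq1)
  have := mul_le_mul_of_nonneg_left (danger_le_potential (F := F) hq0.le A E x) hq'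
  rw [potential_insert hq0.ne' hx]
  linarith

lemma potential_union_add_danger_le (hq : 0 ≤ q) (A E : Finset β) {S : Finset β} {y : β}
    (hy : y ∈ S) : potential q F A (E ∪ S) + danger q F A E y ≤ potential q F A E := by
  simp only [potential, danger, sum_filter, filter_filter, ← sum_add_distrib]
  refine sum_le_sum fun W _ => ?_
  have hW := pow_nonneg hq (W \ A).card
  by_cases hyW : y ∈ W
  · have : ¬ Disjoint W (E ∪ S) := not_disjoint_iff.2 ⟨y, hyW, mem_union_right _ hy⟩
    simp [this, hyW]
  · split_ifs <;> simp_all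

lemma not_subset_of_potential_lt_one (hq : 0 ≤ q) {A E : Finset β} (hAE : Disjoint A E)
    (hF : potential q F A E < 1) : ∀ W ∈ F, ¬ W ⊆ A := by
  intro W hW hWA
  have hmem : W ∈ {W ∈ F | Disjoint W E} := mem_filter.2 ⟨hW, hAE.mono_left hWA⟩
  have := single_le_sum (fun V _ => pow_nonneg hq (V \ A).card) hmem
  rw [sdiff_eq_empty_iff_subset.2 hWA, card_empty, pow_zero] at this
  exact hF.not_ge this

/-- Avoider claims, one at a time, `s` elements of `R` each of minimal current danger. -/
lemma exists_greedy_claim (hq0 : 0 < q) (hq1 : q ≤ 1) {R A : Finset β} (hRA : Disjoint R A)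
    {E : Finset β} {s : ℕ} (hs : potential q F A E < q ^ s) :
    ∃ S ⊆ R, min s #R ≤ #S ∧ potential q F (A ∪ S) E < 1 ∧ ∀ y ∈ R \ S,
      potential q F (A ∪ S) E ≤ potential q F A E + s * (q⁻¹ - 1) * danger q F (A ∪ S) E y := by
  induction s generalizing R A with
  | zero => exact ⟨∅, empty_subset R, by simp, by simpa using hs, by simp⟩
  | succ s ih =>
    obtain rfl | hR := R.eq_empty_or_nonempty
    · exact ⟨∅, empty_subset _, by simp, by simpa using hs.trans_le (pow_le_one₀ hq0.le hq1),
        by simp⟩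
    obtain ⟨x, hxR, hx_min⟩ := R.exists_min_image (danger q F A E) hR
    have hxA : x ∉ A := disjoint_left.1 hRA hxR
    have hx : potential q F (insert x A) E < q ^ s := calc
      _ ≤ q⁻¹ * potential q F A E := potential_insert_le hq0 hq1 hxA E
      _ < q⁻¹ * q ^ (s + 1) := by gcongr
      _ = q ^ s := by rw [pow_succ, mul_comm, mul_inv_cancel_right₀ hq0.ne']
    have hRA' : Disjoint (R.erase x) (insert x A) :=
      disjoint_insert_right.2 ⟨notMem_erase x R, hRA.mono_left (erase_subset x R)⟩
    obtain ⟨S, hSR, hS_card, hS_lt, hS_bound⟩ := ih hRA' hx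
    have hxS : x ∉ S := fun h => notMem_erase x R (hSR h)
    have hAS : A ∪ insert x S = insert x A ∪ S := by rw [union_insert, insert_union]
    refine ⟨insert x S, insert_subset hxR (hSR.trans (erase_subset x R)), ?_, hAS ▸ hS_lt, ?_⟩
    · rw [card_insert_of_notMem hxS]
      rw [card_erase_of_mem hxR] at hS_card
      have := hR.card_pos
      omega
    intro y hy
    obtain ⟨hyR, hyS⟩ := mem_sdiff.1 hy
    have hyR' : y ∈ (R.erase x) \ S :=
      mem_sdiff.2 ⟨mem_erase.2 ⟨fun h => hyS (h ▸ mem_insert_self x S), hyR⟩,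
        fun h => hyS (mem_insert_of_mem h)⟩
    have hxy : danger q F A E x ≤ danger q F (A ∪ insert x S) E y :=
      (hx_min y hyR).trans (danger_mono_claimed hq0.le hq1 subset_union_left E y)
    have hq' : 0 ≤ q⁻¹ - 1 := sub_nonneg.2 (one_le_inv₀ hq0 |>.2 hq1)
    have := hS_bound y hyR'
    rw [potential_insert hq0.ne' hxA, ← hAS] at this
    have := mul_le_mul_of_nonneg_left hxy hq'
    push_cast
    linarith

end Potential

lemma avoiderWinsAux_of_potential {F : Finset (Finset α)} {a b : ℕ} {q : ℝ} (hq : 0 < q)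
    (hqa : a * (q⁻¹ - 1) = 1) (hb : 0 < b) (fuel : ℕ) (t : Bool) {A E : Finset α}
    (hAE : Disjoint A E) (hF : potential q F A E < 1)
    (h_true : t = true → potential q F A E < q ^ a)
    (h_false : t = false →
      ∀ y ∈ univ \ (A ∪ E), potential q F A E - danger q F A E y < q ^ a) :
    avoiderWinsAux F a b fuel t A E := by
  have hq1 : q ≤ 1 := by
    have : 0 < q⁻¹ - 1 := pos_of_mul_pos_right (by rw [hqa]; exact one_pos) (Nat.cast_nonneg a)
    exact (one_le_inv₀ hq).1 (by linarith)
  induction fuel generalizing t A E with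
  | zero => simpa [avoiderWinsAux] using not_subset_of_potential_lt_one hq.le hAE hF
  | succ n ih =>
    simp only [avoiderWinsAux]
    split_ifs with hfree ht
    · obtain ⟨S, hSR, hS_card, hS_lt, hS_bound⟩ := exists_greedy_claim hq hq1
        (disjoint_sdiff_self_left.mono_right subset_union_left) (h_true ht)
      have hSE : Disjoint S E := disjoint_sdiff_self_left.mono hSR subset_union_right
      refine ⟨S, hSR, hS_card, ih false (disjoint_union_left.2 ⟨hAE, hSE⟩) hS_lt (by simp)
        fun _ y hy => ?_⟩
      have := hS_bound y (by simp only [mem_sdiff, mem_univ, mem_union] at hy ⊢; tauto)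
      rw [hqa, one_mul] at this
      linarith [h_true ht]
    · intro S hSR hS_card
      obtain ⟨y, hy⟩ : S.Nonempty := card_pos.1 (by have := hfree.card_pos; omega)
      have hlt : potential q F A (E ∪ S) < q ^ a := by
        have := h_false (by simpa using ht) y (hSR hy)
        linarith [potential_union_add_danger_le (F := F) hq.le A E hy]
      have hAS : Disjoint A S := (disjoint_sdiff_self_left.mono hSR subset_union_left).symm
      exact ih true (disjoint_union_right.2 ⟨hAE, hAS⟩) (hlt.trans_le (pow_le_one₀ hq.le hq1))
        (fun _ => hlt) (by simp)
    · simpa using not_subset_of_potential_lt_one hq.le hAE hF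

lemma one_add_one_div_rpow_neg_natCast {x : ℝ} (hx : 0 < x) (n : ℕ) :
    (1 + 1 / x) ^ (-(n : ℝ)) = (x / (x + 1)) ^ n := by
  rw [Real.rpow_neg (by positivity), Real.rpow_natCast, ← inv_pow]
  congr 1
  field_simp

end AvoiderEnforcer

open AvoiderEnforcer in
/-- If `∑_{W ∈ F} (1+1/a)^{-|W|} < (1+1/a)^{-a}`, then Avoider,
as a first or second player, has a winning strategy in the `(a,b)` Avoider-Enforcer
game `(α, F)`. -/
theorem avoider_criterion (F : Finset (Finset α)) (a b : ℕ) (ha : 0 < a) (hb : 0 < b)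
    (h : ∑ W ∈ F, (1 + 1 / (a : ℝ)) ^ (-(W.card : ℝ)) < (1 + 1 / (a : ℝ)) ^ (-(a : ℝ))) :
    AvoiderWins F a b true ∧ AvoiderWins F a b false := by
  have ha' : (0 : ℝ) < a := Nat.cast_pos.2 ha
  set q : ℝ := a / (a + 1) with hq_def
  have hq : 0 < q := by positivity
  have hqa : a * (q⁻¹ - 1) = 1 := by rw [hq_def]; field_simp; ring
  have h_start : potential q F ∅ ∅ < q ^ a := by
    simp only [one_add_one_div_rpow_neg_natCast ha'] at h
    simpa [potential] using h
  have h_start_one : potential q F ∅ ∅ < 1 :=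
    h_start.trans_le (pow_le_one₀ hq.le (div_le_one_of_le₀ (by linarith) (by positivity)))
  refine ⟨avoiderWinsAux_of_potential hq hqa hb _ true disjoint_bot_left h_start_one
      (fun _ => h_start) (by simp),
    avoiderWinsAux_of_potential hq hqa hb _ false disjoint_bot_left h_start_one (by simp)
      fun _ y _ => ?_⟩
  linarith [danger_nonneg (F := F) hq.le ∅ ∅ y]
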